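/- Let L ≥ 1 and let n₀, n₁, …, n_L be positive integers. For l = 1,…,L let W_l be a random n_l × n_{l−1} matrix whose entries are i.i.d. N(0, σ_{w_l}²) with σ_{w_l} > 0, and let sign(W_l) denote the matrix obtained by applying the sign function entrywise. Let Δx be a random vector in ℝ^{n₀} with i.i.d. N(0,σ²) coordinates (σ > 0), and suppose W₁,…,W_L and Δx are mutually independent. Then for every output coordinate j, Var((sign(W_L)·sign(W_{L−1})·⋯·sign(W₁)·Δx)_j) ≤ σ² · ∏_{l=1}^L n_{l−1}. -/

import Mathlib

open MeasureTheory ProbabilityTheory Real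

/-- The output of a multi-layer linear network: `netOut n W x 0 = x` and
`netOut n W x (l+1) ω = W_l ω ⬝ᵥ netOut n W x l ω`, where `W_l` is the (random) weight
matrix of layer `l+1` and `x` is the (random) input vector. -/
def netOut {Ω : Type*} (n : ℕ → ℕ)
    (W : ∀ l : ℕ, Ω → Matrix (Fin (n (l + 1))) (Fin (n l)) ℝ)
    (x : Ω → Fin (n 0) → ℝ) : ∀ l : ℕ, Ω → Fin (n l) → ℝ
  | 0 => x
  | l + 1 => fun ω => (W l ω).mulVec (netOut n W x l ω)

/-!
Write `Y_l` for the output of layer `l` and `s` for the sign pattern of row `k` of `W_l`.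
Then `(Y_{l+1})_k = ∑ᵢ sᵢ (Y_l)ᵢ`, and `s` is independent of `Y_l` because the two are
functions of disjoint sets of independent parameters.  Expanding the square,
`E[(Y_{l+1})_k²] = ∑ᵢⱼ E[sᵢ sⱼ] E[(Y_l)ᵢ (Y_l)ⱼ]`; the off-diagonal terms vanish since the
signs of independent centered Gaussians are independent with mean zero, and `sᵢ² ≤ 1`.  So each layer
multiplies a uniform bound on the second moments by its fan-in `n_l`, and the variance is at
most the second moment.  The parameters are only a.e. measurable; replacing them by measurable
versions changes neither their laws, their independence, nor the output outside a null set.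
-/

open scoped NNReal ENNReal

lemma Real.measurable_sign : Measurable Real.sign :=
  Measurable.ite measurableSet_Iio measurable_const
    (Measurable.ite measurableSet_Ioi measurable_const measurable_const)

lemma Real.abs_sign_le_one (r : ℝ) : |Real.sign r| ≤ 1 := by
  rcases Real.sign_apply_eq r with h | h | h <;> simp [h]

lemma memLp_top_sign_comp {Ω : Type*} [MeasurableSpace Ω] {μ : Measure Ω} {f : Ω → ℝ}
    (hf : AEMeasurable f μ) : MemLp (fun ω => Real.sign (f ω)) ∞ μ :=
  memLp_top_of_bound (Real.measurable_sign.comp_aemeasurable hf).aestronglyMeasurable 1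
    (ae_of_all _ fun _ => (Real.norm_eq_abs _).trans_le (Real.abs_sign_le_one _))

lemma integral_sign_gaussianReal_zero (v : ℝ≥0) :
    ∫ x, Real.sign x ∂gaussianReal 0 v = 0 := by
  have h : ∫ x, Real.sign (-x) ∂gaussianReal 0 v = ∫ x, Real.sign x ∂gaussianReal 0 v := by
    conv_rhs => rw [← neg_zero, ← gaussianReal_map_neg]
    rw [integral_map (by fun_prop) Real.measurable_sign.aestronglyMeasurable]
  simp only [Real.sign_neg, integral_neg] at h
  linarith

section Gaussian

variable {Ω : Type*} [MeasurableSpace Ω] {μ : Measure Ω} {X : Ω → ℝ} {v : ℝ≥0}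

lemma aemeasurable_of_map_eq_gaussianReal {m : ℝ} (h : Measure.map X μ = gaussianReal m v) :
    AEMeasurable X μ :=
  .of_map_ne_zero (h.trans_ne (IsProbabilityMeasure.ne_zero _))

namespace ProbabilityTheory.HasLaw

lemma memLp_of_gaussianReal {m : ℝ} (hX : HasLaw X (gaussianReal m v) μ) (p : ℝ≥0) :
    MemLp X p μ :=
  (memLp_map_measure_iff aestronglyMeasurable_id hX.aemeasurable).1
    (hX.map_eq ▸ memLp_id_gaussianReal p)

lemma integral_sq_of_gaussianReal (hX : HasLaw X (gaussianReal 0 v) μ) :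
    ∫ ω, X ω ^ 2 ∂μ = v := by
  rw [← variance_of_integral_eq_zero hX.aemeasurable (by simp [hX.integral_eq]), hX.variance_eq,
    variance_id_gaussianReal]

lemma integral_sign_of_gaussianReal (hX : HasLaw X (gaussianReal 0 v) μ) :
    ∫ ω, Real.sign (X ω) ∂μ = 0 :=
  (hX.integral_comp Real.measurable_sign.aestronglyMeasurable).trans
    (integral_sign_gaussianReal_zero v)

end ProbabilityTheory.HasLaw

end Gaussian

section SumOfProducts

variable {Ω ι : Type*} [MeasurableSpace Ω] {μ : Measure Ω} [Fintype ι] {s Z : ι → Ω → ℝ}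

lemma integral_sq_sum_mul_eq (hs : ∀ i, MemLp (s i) ∞ μ) (hs0 : ∀ i, μ[s i] = 0)
    (hss : Pairwise fun i j => s i ⟂ᵢ[μ] s j) (hsZ : (fun ω i => s i ω) ⟂ᵢ[μ] fun ω i => Z i ω)
    (hZ : ∀ i, MemLp (Z i) 2 μ) :
    ∫ ω, (∑ i, s i ω * Z i ω) ^ 2 ∂μ = ∑ i, (∫ ω, s i ω ^ 2 ∂μ) * ∫ ω, Z i ω ^ 2 ∂μ := by
  have hterm (i j : ι) : ∫ ω, s i ω * Z i ω * (s j ω * Z j ω) ∂μ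
      = (∫ ω, s i ω * s j ω ∂μ) * ∫ ω, Z i ω * Z j ω ∂μ := by
    have hind : (fun ω => s i ω * s j ω) ⟂ᵢ[μ] fun ω => Z i ω * Z j ω :=
      hsZ.comp (φ := fun u : ι → ℝ => u i * u j) (ψ := fun u : ι → ℝ => u i * u j)
        (by fun_prop) (by fun_prop)
    simp_rw [mul_mul_mul_comm]
    exact hind.integral_fun_mul_eq_mul_integral ((hs i).1.mul (hs j).1) ((hZ i).1.mul (hZ j).1)
  have hcross {i j : ι} (hij : i ≠ j) : ∫ ω, s i ω * s j ω ∂μ = 0 := by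
    rw [(hss hij).integral_fun_mul_eq_mul_integral (hs i).1 (hs j).1, hs0 i, zero_mul]
  have hint (i j : ι) : Integrable (fun ω => s i ω * Z i ω * (s j ω * Z j ω)) μ :=
    ((hZ i).mul (r := 2) (hs i)).integrable_mul ((hZ j).mul (r := 2) (hs j))
  calc ∫ ω, (∑ i, s i ω * Z i ω) ^ 2 ∂μ
      = ∑ i, ∑ j, ∫ ω, s i ω * Z i ω * (s j ω * Z j ω) ∂μ := by
        simp_rw [sq, Finset.sum_mul_sum]
        rw [integral_finsetSum _ fun i _ => integrable_finsetSum _ fun j _ => hint i j]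
        exact Finset.sum_congr rfl fun i _ => integral_finsetSum _ fun j _ => hint i j
    _ = ∑ i, (∫ ω, s i ω ^ 2 ∂μ) * ∫ ω, Z i ω ^ 2 ∂μ := by
        refine Finset.sum_congr rfl fun i _ => ?_
        rw [Finset.sum_eq_single i (fun j _ hji => by rw [hterm, hcross hji.symm, zero_mul])
          (by simp), hterm]
        simp_rw [sq]

lemma integral_sq_sum_mul_le [IsProbabilityMeasure μ] (hs : ∀ i, AEStronglyMeasurable (s i) μ)
    (hs1 : ∀ i ω, |s i ω| ≤ 1) (hs0 : ∀ i, μ[s i] = 0) (hss : Pairwise fun i j => s i ⟂ᵢ[μ] s j)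
    (hsZ : (fun ω i => s i ω) ⟂ᵢ[μ] fun ω i => Z i ω) (hZ : ∀ i, MemLp (Z i) 2 μ) :
    ∫ ω, (∑ i, s i ω * Z i ω) ^ 2 ∂μ ≤ ∑ i, ∫ ω, Z i ω ^ 2 ∂μ := by
  have hs_bdd (p : ℝ≥0∞) (i : ι) : MemLp (s i) p μ :=
    .of_bound (hs i) 1 (ae_of_all _ fun ω => (Real.norm_eq_abs _).trans_le (hs1 i ω))
  rw [integral_sq_sum_mul_eq (hs_bdd ∞) hs0 hss hsZ hZ]
  gcongr with i
  refine mul_le_of_le_one_left (integral_nonneg fun ω => sq_nonneg _) ?_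
  calc ∫ ω, s i ω ^ 2 ∂μ ≤ ∫ _, 1 ∂μ :=
        integral_mono (hs_bdd 2 i).integrable_sq (integrable_const 1)
          fun ω => (sq_le_one_iff_abs_le_one _).2 (hs1 i ω)
    _ = 1 := by simp

end SumOfProducts

/-- `.inl ⟨l, (i, j)⟩` indexes the entry `(i, j)` of `W_l`, and `.inr i` the input entry `i`. -/
abbrev NetParam (L : ℕ) (n : ℕ → ℕ) : Type :=
  (Σ l : Fin L, Fin (n (l + 1)) × Fin (n l)) ⊕ Fin (n 0)

section Network

variable {Ω : Type*} {L : ℕ} {n : ℕ → ℕ}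

def netParams (L : ℕ) (W : ∀ l : ℕ, Ω → Matrix (Fin (n (l + 1))) (Fin (n l)) ℝ)
    (x : Ω → Fin (n 0) → ℝ) : NetParam L n → Ω → ℝ :=
  Sum.elim (fun q ω => W q.1 ω q.2.1 q.2.2) fun i ω => x ω i

noncomputable abbrev binNetOut (n : ℕ → ℕ)
    (W : ∀ l : ℕ, Ω → Matrix (Fin (n (l + 1))) (Fin (n l)) ℝ) (x : Ω → Fin (n 0) → ℝ) :
    ∀ l : ℕ, Ω → Fin (n l) → ℝ :=
  netOut n (fun l ω => (W l ω).map Real.sign) x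

namespace NetParam

/-- The parameters on which the output of layer `m` depends. -/
def earlier (m : ℕ) : Set (NetParam L n) := Sum.elim (fun q => (q.1 : ℕ) < m) fun _ => True

lemma earlier_mono : Monotone (earlier : ℕ → Set (NetParam L n)) := by
  rintro m m' hmm' (⟨l, _⟩ | i) h
  exacts [lt_of_lt_of_le h hmm', trivial]

def row (l : Fin L) (k : Fin (n (l + 1))) : Set (NetParam L n) :=
  Set.range fun i => .inl ⟨l, (k, i)⟩

lemma disjoint_row_earlier (l : Fin L) (k : Fin (n (l + 1))) :
    Disjoint (row l k) (earlier l) := by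
  rw [Set.disjoint_left]
  rintro _ ⟨i, rfl⟩ (h : (l : ℕ) < l)
  exact lt_irrefl _ h

def weights (g : NetParam L n → Ω → ℝ) : ∀ l : ℕ, Ω → Matrix (Fin (n (l + 1))) (Fin (n l)) ℝ :=
  fun l ω i j => if h : l < L then g (.inl ⟨⟨l, h⟩, (i, j)⟩) ω else 0

def input (g : NetParam L n → Ω → ℝ) : Ω → Fin (n 0) → ℝ := fun ω i => g (.inr i) ω

lemma netParams_weights_input (g : NetParam L n → Ω → ℝ) :
    netParams L (weights g) (input g) = g := by
  funext a
  rcases a with ⟨l, i, j⟩ | i <;> simp [netParams, weights, input]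

end NetParam

variable {W W' : ∀ l : ℕ, Ω → Matrix (Fin (n (l + 1))) (Fin (n l)) ℝ}
  {x x' : Ω → Fin (n 0) → ℝ}

lemma binNetOut_succ_apply (m : ℕ) (ω : Ω) (k : Fin (n (m + 1))) :
    binNetOut n W x (m + 1) ω k = ∑ i, Real.sign (W m ω k i) * binNetOut n W x m ω i :=
  rfl

lemma binNetOut_congr {ω : Ω} (h : ∀ a, netParams L W x a ω = netParams L W' x' a ω) :
    ∀ m ≤ L, binNetOut n W x m ω = binNetOut n W' x' m ω
  | 0, _ => funext fun i => h (.inr i)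
  | m + 1, hm => funext fun k => by
    simp only [binNetOut_succ_apply, binNetOut_congr h m (Nat.le_of_succ_le hm)]
    congr! 3 with i
    exact h (.inl ⟨⟨m, hm⟩, (k, i)⟩)

lemma measurable_netParams_of_mem {S : Set (NetParam L n)} {a : NetParam L n} (ha : a ∈ S) :
    Measurable[⨆ b ∈ S, (borel ℝ).comap (netParams L W x b)] (netParams L W x a) :=
  (comap_measurable _).mono (le_iSup₂_of_le a ha le_rfl) le_rfl

lemma measurable_binNetOut_earlier :
    ∀ m ≤ L, ∀ k, Measurable[⨆ b ∈ NetParam.earlier m, (borel ℝ).comap (netParams L W x b)]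
      fun ω => binNetOut n W x m ω k
  | 0, _, k => measurable_netParams_of_mem (a := .inr k) trivial
  | m + 1, hm, k => by
    simp only [binNetOut_succ_apply]
    refine Finset.measurable_sum _ fun i _ => .mul ?_ ?_
    · exact Real.measurable_sign.comp
        (measurable_netParams_of_mem (a := .inl ⟨⟨m, hm⟩, (k, i)⟩) (Nat.lt_succ_self m))
    · refine (measurable_binNetOut_earlier m (Nat.le_of_succ_le hm) i).mono ?_ le_rfl
      exact biSup_mono fun b hb => NetParam.earlier_mono (Nat.le_succ m) hb

variable [MeasurableSpace Ω] {μ : Measure Ω}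

lemma exists_measurable_netParams_ae_eq (h : ∀ a, AEMeasurable (netParams L W x a) μ) :
    ∃ (W' : ∀ l : ℕ, Ω → Matrix (Fin (n (l + 1))) (Fin (n l)) ℝ) (x' : Ω → Fin (n 0) → ℝ),
      (∀ a, Measurable (netParams L W' x' a)) ∧
        ∀ a, netParams L W x a =ᵐ[μ] netParams L W' x' a := by
  refine ⟨NetParam.weights fun a => (h a).mk, NetParam.input fun a => (h a).mk, ?_⟩
  rw [NetParam.netParams_weights_input]
  exact ⟨fun a => (h a).measurable_mk, fun a => (h a).ae_eq_mk⟩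

lemma binNetOut_ae_eq (h : ∀ a, netParams L W x a =ᵐ[μ] netParams L W' x' a) {m : ℕ}
    (hm : m ≤ L) : (fun ω => binNetOut n W x m ω) =ᵐ[μ] fun ω => binNetOut n W' x' m ω := by
  filter_upwards [ae_all_iff.2 h] with ω hω
  exact binNetOut_congr hω m hm

lemma indepFun_sign_row_binNetOut (hmeas : ∀ a, Measurable (netParams L W x a))
    (hindep : iIndepFun (netParams L W x) μ) (l : Fin L) (k : Fin (n (l + 1))) :
    (fun ω i => Real.sign (W l ω k i)) ⟂ᵢ[μ] fun ω i => binNetOut n W x l ω i := by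
  have hsep := indep_iSup_of_disjoint (fun a => (hmeas a).comap_le) hindep
    (NetParam.disjoint_row_earlier l k)
  rw [IndepFun_iff_Indep]
  refine indep_of_indep_of_le_right (indep_of_indep_of_le_left hsep
    (Measurable.comap_le ?_)) (Measurable.comap_le ?_)
  · exact @measurable_pi_lambda _ _ _ (_) _ _ fun i =>
      Real.measurable_sign.comp (measurable_netParams_of_mem (S := NetParam.row l k) ⟨i, rfl⟩)
  · exact @measurable_pi_lambda _ _ _ (_) _ _ (measurable_binNetOut_earlier l l.is_lt.le)

lemma memLp_binNetOut (hmeas : ∀ a, Measurable (netParams L W x a)) {p : ℝ≥0∞}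
    (hx : ∀ i, MemLp (fun ω => x ω i) p μ) :
    ∀ m ≤ L, ∀ k, MemLp (fun ω => binNetOut n W x m ω k) p μ
  | 0, _, k => hx k
  | m + 1, hm, k => by
    simp only [binNetOut_succ_apply]
    refine memLp_finsetSum _ fun i _ => ?_
    exact (memLp_binNetOut hmeas hx m (Nat.le_of_succ_le hm) i).mul (r := p)
      (memLp_top_sign_comp (hmeas (.inl ⟨⟨m, hm⟩, (k, i)⟩)).aemeasurable)

lemma integral_sq_binNetOut_le [IsProbabilityMeasure μ]
    (hmeas : ∀ a, Measurable (netParams L W x a)) (hindep : iIndepFun (netParams L W x) μ)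
    (hW : ∀ (l : Fin L) i j, ∫ ω, Real.sign (W l ω i j) ∂μ = 0) {c : ℝ}
    (hx : ∀ i, MemLp (fun ω => x ω i) 2 μ) (hxc : ∀ i, ∫ ω, x ω i ^ 2 ∂μ ≤ c) :
    ∀ m ≤ L, ∀ k, ∫ ω, binNetOut n W x m ω k ^ 2 ∂μ ≤ c * ∏ l ∈ Finset.range m, (n l : ℝ)
  | 0, _, k => by rw [Finset.prod_range_zero, mul_one]; exact hxc k
  | m + 1, hm, k => by
    let l : Fin L := ⟨m, hm⟩
    have hsign (i : Fin (n m)) : Measurable fun ω => Real.sign (W l ω k i) :=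
      Real.measurable_sign.comp (hmeas (.inl ⟨l, (k, i)⟩))
    calc ∫ ω, binNetOut n W x (m + 1) ω k ^ 2 ∂μ
        ≤ ∑ i, ∫ ω, binNetOut n W x m ω i ^ 2 ∂μ :=
          integral_sq_sum_mul_le (s := fun i ω => Real.sign (W l ω k i))
            (fun i => (hsign i).aestronglyMeasurable) (fun i ω => Real.abs_sign_le_one _)
            (fun i => hW l k i)
            (fun i j hij => (hindep.indepFun (i := .inl ⟨l, (k, i)⟩) (j := .inl ⟨l, (k, j)⟩)
              (by simpa using hij)).comp Real.measurable_sign Real.measurable_sign)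
            (indepFun_sign_row_binNetOut hmeas hindep l k)
            (memLp_binNetOut hmeas hx m (Nat.le_of_succ_le hm))
      _ ≤ ∑ _i : Fin (n m), c * ∏ l ∈ Finset.range m, (n l : ℝ) :=
          Finset.sum_le_sum fun i _ =>
            integral_sq_binNetOut_le hmeas hindep hW hx hxc m (Nat.le_of_succ_le hm) i
      _ = c * ∏ l ∈ Finset.range (m + 1), (n l : ℝ) := by
          rw [Finset.sum_const, Finset.card_univ, Fintype.card_fin, nsmul_eq_mul,
            Finset.prod_range_succ]
          ring

end Network

theorem variance_multilayer_weight_binarized_le_general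
    {Ω : Type*} [MeasurableSpace Ω] (μ : Measure Ω) [IsProbabilityMeasure μ]
    (L : ℕ) (n : ℕ → ℕ)
    (σw : Fin L → ℝ) (σ : ℝ)
    (W : ∀ l : ℕ, Ω → Matrix (Fin (n (l + 1))) (Fin (n l)) ℝ)
    (Δx : Ω → Fin (n 0) → ℝ)
    (hW : ∀ (l : Fin L) (i : Fin (n ((l : ℕ) + 1))) (j : Fin (n (l : ℕ))),
      Measure.map (fun ω => W (l : ℕ) ω i j) μ
        = gaussianReal 0 ⟨(σw l) ^ 2, sq_nonneg (σw l)⟩)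
    (hΔx : ∀ i, Measure.map (fun ω => Δx ω i) μ
        = gaussianReal 0 ⟨σ ^ 2, sq_nonneg σ⟩)
    (hindep : iIndepFun
      (Sum.elim
        (fun q : Σ l : Fin L, Fin (n ((l : ℕ) + 1)) × Fin (n (l : ℕ)) =>
          fun ω => W (q.1 : ℕ) ω q.2.1 q.2.2)
        (fun i : Fin (n 0) => fun ω => Δx ω i)) μ) :
    ∀ j : Fin (n L),
      variance
          (fun ω => netOut n (fun l ω' => (W l ω').map Real.sign) Δx L ω j) μ
        ≤ σ ^ 2 * ∏ l : Fin L, (n (l : ℕ) : ℝ) := by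
  intro j
  have hae (a : NetParam L n) : AEMeasurable (netParams L W Δx a) μ := by
    rcases a with ⟨l, i, k⟩ | i
    exacts [aemeasurable_of_map_eq_gaussianReal (hW l i k),
      aemeasurable_of_map_eq_gaussianReal (hΔx i)]
  obtain ⟨W', x', hmeas, hW'⟩ := exists_measurable_netParams_ae_eq hae
  have hlaw {a : NetParam L n} {ν : Measure ℝ} (h : Measure.map (netParams L W Δx a) μ = ν) :
      HasLaw (netParams L W' x' a) ν μ :=
    ⟨(hmeas a).aemeasurable, (Measure.map_congr (hW' a)).symm.trans h⟩
  have hx' (i : Fin (n 0)) : HasLaw (fun ω => x' ω i) (gaussianReal 0 ⟨σ ^ 2, sq_nonneg σ⟩) μ :=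
    hlaw (a := .inr i) (hΔx i)
  have hx'_memLp (i : Fin (n 0)) : MemLp (fun ω => x' ω i) 2 μ := (hx' i).memLp_of_gaussianReal 2
  calc variance (fun ω => binNetOut n W Δx L ω j) μ
      = variance (fun ω => binNetOut n W' x' L ω j) μ :=
        variance_congr ((binNetOut_ae_eq hW' le_rfl).mono fun ω h => congrFun h j)
    _ ≤ ∫ ω, binNetOut n W' x' L ω j ^ 2 ∂μ :=
        variance_le_expectation_sq (memLp_binNetOut hmeas hx'_memLp L le_rfl j).1
    _ ≤ σ ^ 2 * ∏ l ∈ Finset.range L, (n l : ℝ) :=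
        integral_sq_binNetOut_le hmeas (hindep.congr hW')
          (fun l i k => (hlaw (a := .inl ⟨l, (i, k)⟩) (hW l i k)).integral_sign_of_gaussianReal)
          hx'_memLp (fun i => (hx' i).integral_sq_of_gaussianReal.le) L le_rfl j
    _ = σ ^ 2 * ∏ l : Fin L, (n (l : ℕ) : ℝ) := by
        rw [Fin.prod_univ_eq_prod_range (fun l => (n l : ℝ))]

/-- **Multi-layer accumulated perturbation bound, weight-binarized network.**  If the
entries of the layer-`l` weight matrix `W_l` (of size `n_{l+1} × n_l`) are i.i.d.
`N(0,σ_{w_l}²)`, the coordinates of the input perturbation `Δx` are i.i.d. `N(0,σ²)`,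
all mutually independent, and `sign(W_l)` denotes the entrywise sign of `W_l`
(`Real.sign t` is `1` if `t > 0`, `-1` if `t < 0`, `0` if `t = 0`), then every
coordinate `j` of the output variation `sign(W_{L-1})·⋯·sign(W_0)·Δx` satisfies
`Var((sign(W_{L-1})·⋯·sign(W_0)·Δx)_j) ≤ σ² · ∏_{l<L} n_l`. -/
theorem variance_multilayer_weight_binarized_le
    {Ω : Type*} [MeasurableSpace Ω] (μ : Measure Ω) [IsProbabilityMeasure μ]
    (L : ℕ) (hL : 1 ≤ L) (n : ℕ → ℕ) (hn : ∀ l ≤ L, 0 < n l)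
    (σw : Fin L → ℝ) (hσw : ∀ l, 0 < σw l) (σ : ℝ) (hσ : 0 < σ)
    (W : ∀ l : ℕ, Ω → Matrix (Fin (n (l + 1))) (Fin (n l)) ℝ)
    (Δx : Ω → Fin (n 0) → ℝ)
    (hW : ∀ (l : Fin L) (i : Fin (n ((l : ℕ) + 1))) (j : Fin (n (l : ℕ))),
      Measure.map (fun ω => W (l : ℕ) ω i j) μ
        = gaussianReal 0 ⟨(σw l) ^ 2, sq_nonneg (σw l)⟩)
    (hΔx : ∀ i, Measure.map (fun ω => Δx ω i) μ
        = gaussianReal 0 ⟨σ ^ 2, sq_nonneg σ⟩)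
    (hindep : iIndepFun
      (Sum.elim
        (fun q : Σ l : Fin L, Fin (n ((l : ℕ) + 1)) × Fin (n (l : ℕ)) =>
          fun ω => W (q.1 : ℕ) ω q.2.1 q.2.2)
        (fun i : Fin (n 0) => fun ω => Δx ω i)) μ) :
    ∀ j : Fin (n L),
      variance
          (fun ω => netOut n (fun l ω' => (W l ω').map Real.sign) Δx L ω j) μ
        ≤ σ ^ 2 * ∏ l : Fin L, (n (l : ℕ) : ℝ) :=
  variance_multilayer_weight_binarized_le_general μ L n σw σ W Δx hW hΔx hindep
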